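/- Let s ≥ 1 be an integer and c_1 < … < c_s be s distinct real numbers symmetric with respect to 1/2 (c_i + c_{s+1−i} = 1 for all i). If the polynomial τ(π) has no root on the imaginary axis iℝ, then the associated Runge–Kutta collocation method is Î-stable (I-stable, IS-stable and ISI-stable). -/

import Mathlib

open Polynomial Matrix MeasureTheory

noncomputable section

/-- Lagrange basis function `ℓ_i(t) = ∏_{j≠i} (t - c_j)/(c_i - c_j)`. -/
def lagrangeFun (s : ℕ) (c : Fin s → ℝ) (i : Fin s) (t : ℝ) : ℝ :=
  ∏ j ∈ Finset.univ.erase i, (t - c j) / (c i - c j)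

/-- Coefficient matrix `A` of the collocation method: `a_{ij} = ∫_0^{c_i} ℓ_j`. -/
def collocA (s : ℕ) (c : Fin s → ℝ) : Matrix (Fin s) (Fin s) ℝ :=
  Matrix.of fun i j => ∫ t in (0:ℝ)..(c i), lagrangeFun s c j t

/-- Weight vector `b` of the collocation method: `b_i = ∫_0^1 ℓ_i`. -/
def collocB (s : ℕ) (c : Fin s → ℝ) : Fin s → ℝ :=
  fun i => ∫ t in (0:ℝ)..(1:ℝ), lagrangeFun s c i t

/-- `π = ∏ (X - c_i)`. -/
def piPoly (s : ℕ) (c : Fin s → ℝ) : Polynomial ℝ :=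
  ∏ i : Fin s, (Polynomial.X - Polynomial.C (c i))

/-- The linear map `τ` sending `Σ a_k X^k` to `Σ k! a_k X^k`. -/
def tauP (p : Polynomial ℝ) : Polynomial ℝ :=
  ∑ k ∈ p.support, Polynomial.C ((k.factorial : ℝ) * p.coeff k) * Polynomial.X ^ k

/-- The matrix `A` viewed as a complex matrix. -/
def collocAC (s : ℕ) (c : Fin s → ℝ) : Matrix (Fin s) (Fin s) ℂ :=
  (collocA s c).map (fun x => (x : ℂ))

/-- The weight vector `b` viewed as a complex vector. -/
def collocBC (s : ℕ) (c : Fin s → ℝ) : Fin s → ℂ :=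
  fun i => (collocB s c i : ℂ)

/-- The linear stability function `R(λ) = 1 + λ bᵀ (I - λ A)⁻¹ 𝟙`. -/
def stabR (s : ℕ) (c : Fin s → ℝ) (lam : ℂ) : ℂ :=
  1 + lam * (collocBC s c ⬝ᵥ ((1 - lam • collocAC s c)⁻¹ *ᵥ (fun _ => 1)))

/-- A-stability: `|R(λ)| ≤ 1` on the closed left half-plane (where defined). -/
def AStable (s : ℕ) (c : Fin s → ℝ) : Prop :=
  ∀ lam : ℂ, lam.re ≤ 0 → IsUnit (1 - lam • collocAC s c).det →
    ‖stabR s c lam‖ ≤ 1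

/-- I-stability: `|R(λ)| ≤ 1` on the imaginary axis (where defined). -/
def IStable (s : ℕ) (c : Fin s → ℝ) : Prop :=
  ∀ lam : ℂ, lam.re = 0 → IsUnit (1 - lam • collocAC s c).det →
    ‖stabR s c lam‖ ≤ 1

/-- AS-stability: `I - λA` invertible on `ℂ⁻` and `λ bᵀ (I - λA)⁻¹` uniformly bounded there. -/
def ASStable (s : ℕ) (c : Fin s → ℝ) : Prop :=
  (∀ lam : ℂ, lam.re ≤ 0 → IsUnit (1 - lam • collocAC s c).det) ∧
  ∃ M : ℝ, ∀ lam : ℂ, lam.re ≤ 0 → ∀ j,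
    ‖lam * (collocBC s c ᵥ* (1 - lam • collocAC s c)⁻¹) j‖ ≤ M

/-- ASI-stability: `I - λA` invertible on `ℂ⁻` and `(I - λA)⁻¹` uniformly bounded there. -/
def ASIStable (s : ℕ) (c : Fin s → ℝ) : Prop :=
  (∀ lam : ℂ, lam.re ≤ 0 → IsUnit (1 - lam • collocAC s c).det) ∧
  ∃ M : ℝ, ∀ lam : ℂ, lam.re ≤ 0 → ∀ i j,
    ‖(1 - lam • collocAC s c)⁻¹ i j‖ ≤ M

/-- IS-stability: `I - λA` invertible on `iℝ` and `λ bᵀ (I - λA)⁻¹` uniformly bounded there. -/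
def ISStable (s : ℕ) (c : Fin s → ℝ) : Prop :=
  (∀ lam : ℂ, lam.re = 0 → IsUnit (1 - lam • collocAC s c).det) ∧
  ∃ M : ℝ, ∀ lam : ℂ, lam.re = 0 → ∀ j,
    ‖lam * (collocBC s c ᵥ* (1 - lam • collocAC s c)⁻¹) j‖ ≤ M

/-- ISI-stability: `I - λA` invertible on `iℝ` and `(I - λA)⁻¹` uniformly bounded there. -/
def ISIStable (s : ℕ) (c : Fin s → ℝ) : Prop :=
  (∀ lam : ℂ, lam.re = 0 → IsUnit (1 - lam • collocAC s c).det) ∧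
  ∃ M : ℝ, ∀ lam : ℂ, lam.re = 0 → ∀ i j,
    ‖(1 - lam • collocAC s c)⁻¹ i j‖ ≤ M

end

/-!
Collocation turns the stability questions into questions about polynomials `u` of degree `≤ s`
with `u'(c_i) = λ u(c_i)` at all nodes. If `λ ≠ 0` and `τ(π)(1/λ) ≠ 0`, the only such `u` with
`u(0) = 0` is `0`: the polynomial `u' - λ u` vanishes at the nodes, so it equals `γ π`, and adding
`γ F` with `F = ∑ λ^(-k-1) π^(k)`, which solves `F' = λ F - π`, gives an exact polynomial solution
of `w' = λ w`, hence `w = 0`; at `t = 0` this reads `γ λ⁻¹ τ(π)(1/λ) = 0`. This uniqueness makes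
`I - λA` invertible on `iℝ`. For `λ ∈ iℝ` the reflection `u(1 - t)` and the conjugate `ū` of the
collocation solution with `u(0) = 1` both solve the problem for `-λ` (here the symmetry of the
nodes enters), so `u(1 - t) = R(λ) ū`, and `t = 1` gives `1 = |R(λ)|²`.
Since `τ(π)(0) = π(0)`, no node is `0`, which makes `A` invertible; then `(I - λA)⁻¹ → 0` and
`λ (I - λA)⁻¹ → -A⁻¹` as `|λ| → ∞`, and continuity on `iℝ` gives the uniform bounds.
-/

open Filter Topology Bornology

noncomputable section

section Antideriv

variable {K : Type*} [Field K]

def antideriv (p : K[X]) : K[X] :=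
  ∑ k ∈ p.support, C (p.coeff k / (k + 1)) * X ^ (k + 1)

theorem derivative_antideriv [CharZero K] (p : K[X]) : derivative (antideriv p) = p := by
  rw [antideriv, map_sum]
  conv_rhs => rw [p.as_sum_support_C_mul_X_pow]
  refine Finset.sum_congr rfl fun k _ => ?_
  rw [derivative_C_mul_X_pow, add_tsub_cancel_right, Nat.cast_add_one,
    div_mul_cancel₀ _ (Nat.cast_add_one_ne_zero k)]

theorem eval_zero_antideriv (p : K[X]) : (antideriv p).eval 0 = 0 := by
  simp [antideriv, eval_finsetSum]

theorem natDegree_antideriv_le (p : K[X]) : (antideriv p).natDegree ≤ p.natDegree + 1 :=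
  natDegree_sum_le_of_forall_le _ _ fun k hk =>
    (natDegree_C_mul_X_pow_le _ _).trans (Nat.add_le_add_right (le_natDegree_of_mem_supp k hk) 1)

end Antideriv

theorem integral_eval_eq_eval_antideriv (p : ℝ[X]) (x : ℝ) :
    ∫ t in (0 : ℝ)..x, p.eval t = (antideriv p).eval x := by
  have hderiv (t : ℝ) : HasDerivAt (fun y => (antideriv p).eval y) (p.eval t) t := by
    simpa only [derivative_antideriv] using (antideriv p).hasDerivAt t
  rw [intervalIntegral.integral_eq_sub_of_hasDerivAt (fun t _ => hderiv t)
    (p.continuous.intervalIntegrable _ _), eval_zero_antideriv, sub_zero]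

theorem eval_ofReal_map (p : ℝ[X]) (x : ℝ) :
    (p.map (algebraMap ℝ ℂ)).eval (x : ℂ) = p.eval x := by
  rw [eval_map_algebraMap, ← Complex.coe_algebraMap, aeval_algebraMap_apply,
    coe_aeval_eq_eval]

section Collocation

variable {s : ℕ} {c : Fin s → ℝ}

theorem lagrangeFun_eq_eval_basis (j : Fin s) (t : ℝ) :
    lagrangeFun s c j t = (Lagrange.basis Finset.univ c j).eval t := by
  simp only [lagrangeFun, Lagrange.basis, Lagrange.basisDivisor, eval_prod, eval_mul, eval_C,
    eval_sub, eval_X, div_eq_inv_mul]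

def lagrangePrimitive (c : Fin s → ℝ) (j : Fin s) : ℂ[X] :=
  (antideriv (Lagrange.basis Finset.univ c j)).map (algebraMap ℝ ℂ)

theorem collocAC_apply (i j : Fin s) :
    collocAC s c i j = (lagrangePrimitive c j).eval (c i : ℂ) := by
  simp only [collocAC, collocA, map_apply, of_apply, lagrangeFun_eq_eval_basis,
    integral_eval_eq_eval_antideriv, lagrangePrimitive, eval_ofReal_map]

theorem collocBC_apply (j : Fin s) : collocBC s c j = (lagrangePrimitive c j).eval 1 := by
  simp only [collocBC, collocB, lagrangeFun_eq_eval_basis, integral_eval_eq_eval_antideriv,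
    lagrangePrimitive, ← Complex.ofReal_one, eval_ofReal_map]

theorem eval_zero_lagrangePrimitive (j : Fin s) : (lagrangePrimitive c j).eval 0 = 0 := by
  rw [lagrangePrimitive, ← Complex.ofReal_zero, eval_ofReal_map, eval_zero_antideriv,
    Complex.ofReal_zero]

theorem eval_derivative_lagrangePrimitive (hc : Function.Injective c) (i j : Fin s) :
    (derivative (lagrangePrimitive c j)).eval (c i : ℂ) = if i = j then 1 else 0 := by
  rw [lagrangePrimitive, derivative_map, derivative_antideriv, eval_ofReal_map]
  split_ifs with hij
  · rw [hij, Lagrange.eval_basis_self hc.injOn (Finset.mem_univ j), Complex.ofReal_one]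
  · rw [Lagrange.eval_basis_of_ne (Ne.symm hij) (Finset.mem_univ i), Complex.ofReal_zero]

theorem natDegree_lagrangePrimitive_le (hc : Function.Injective c) (j : Fin s) :
    (lagrangePrimitive c j).natDegree ≤ s := by
  have hbasis : (Lagrange.basis Finset.univ c j).natDegree = s - 1 := by
    rw [Lagrange.natDegree_basis hc.injOn (Finset.mem_univ j), Finset.card_univ,
      Fintype.card_fin]
  have := natDegree_antideriv_le (Lagrange.basis Finset.univ c j)
  rw [lagrangePrimitive, natDegree_map]
  have := j.pos
  omega

/-- For stages `v` with `(I - λA) v = e 𝟙` this is the collocation polynomial of `y' = λ y`,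
`y(0) = e`. -/
def collocPoly (c : Fin s → ℝ) (lam e : ℂ) (v : Fin s → ℂ) : ℂ[X] :=
  C e + C lam * ∑ j, C (v j) * lagrangePrimitive c j

variable (lam e : ℂ) (v : Fin s → ℂ)

theorem eval_zero_collocPoly : (collocPoly c lam e v).eval 0 = e := by
  simp [collocPoly, eval_finsetSum, eval_zero_lagrangePrimitive]

theorem eval_collocPoly_node (i : Fin s) :
    (collocPoly c lam e v).eval (c i : ℂ) = e + lam * (collocAC s c *ᵥ v) i := by
  simp only [collocPoly, eval_add, eval_mul, eval_C, eval_finsetSum, mulVec, dotProduct,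
    collocAC_apply, mul_comm]

theorem eval_one_collocPoly :
    (collocPoly c lam e v).eval 1 = e + lam * (collocBC s c ⬝ᵥ v) := by
  simp only [collocPoly, eval_add, eval_mul, eval_C, eval_finsetSum, dotProduct,
    collocBC_apply, mul_comm]

theorem eval_derivative_collocPoly_node (hc : Function.Injective c) (i : Fin s) :
    (derivative (collocPoly c lam e v)).eval (c i : ℂ) = lam * v i := by
  simp [collocPoly, eval_finsetSum, eval_derivative_lagrangePrimitive hc]

theorem natDegree_collocPoly_le (hc : Function.Injective c) :
    (collocPoly c lam e v).natDegree ≤ s := by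
  refine natDegree_add_le_of_degree_le (natDegree_C e ▸ Nat.zero_le s) ?_
  refine (natDegree_C_mul_le _ _).trans (natDegree_sum_le_of_forall_le _ _ fun j _ => ?_)
  exact (natDegree_C_mul_le _ _).trans (natDegree_lagrangePrimitive_le hc j)

end Collocation

section Uniqueness

theorem coeff_tauP (p : ℝ[X]) (k : ℕ) : (tauP p).coeff k = k.factorial * p.coeff k := by
  simp only [tauP, finsetSum_coeff, coeff_C_mul_X_pow, Finset.sum_ite_eq]
  split_ifs with hk
  · rfl
  · rw [notMem_support_iff.mp hk, mul_zero]

theorem aeval_tauP (p : ℝ[X]) (z : ℂ) :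
    aeval z (tauP p) = ∑ k ∈ Finset.range (p.natDegree + 1), k.factorial * p.coeff k * z ^ k := by
  have hdeg : (tauP p).natDegree < p.natDegree + 1 :=
    Nat.lt_succ_of_le <| natDegree_le_iff_coeff_eq_zero.2 fun k hk => by
      rw [coeff_tauP, coeff_eq_zero_of_natDegree_lt hk, mul_zero]
  rw [aeval_eq_sum_range' hdeg]
  refine Finset.sum_congr rfl fun k _ => ?_
  rw [coeff_tauP, Complex.real_smul]
  push_cast
  ring

/-- The Neumann series `μ (1 - μ D)⁻¹ p`, finite since the derivative `D` is nilpotent on `p`. -/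
def derivResolvent {R : Type*} [CommRing R] (μ : R) (p : R[X]) : R[X] :=
  ∑ k ∈ Finset.range (p.natDegree + 1), C (μ ^ (k + 1)) * derivative^[k] p

theorem derivResolvent_sub_C_mul_derivative {R : Type*} [CommRing R] (μ : R) (p : R[X]) :
    derivResolvent μ p - C μ * derivative (derivResolvent μ p) = C μ * p := by
  have hstep (k : ℕ) : C μ * derivative (C (μ ^ (k + 1)) * derivative^[k] p) =
      C (μ ^ (k + 1 + 1)) * derivative^[k + 1] p := by
    rw [derivative_C_mul, Function.iterate_succ_apply', ← mul_assoc, ← C_mul, ← pow_succ']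
  rw [derivResolvent, map_sum, Finset.mul_sum]
  simp only [hstep]
  rw [← Finset.sum_sub_distrib,
    Finset.sum_range_sub' (fun k => C (μ ^ (k + 1)) * derivative^[k] p),
    iterate_derivative_eq_zero (Nat.lt_succ_self _), mul_zero, sub_zero, zero_add, pow_one,
    Function.iterate_zero_apply]

theorem eval_zero_derivResolvent_map (μ : ℂ) (p : ℝ[X]) :
    (derivResolvent μ (p.map (algebraMap ℝ ℂ))).eval 0 = μ * aeval μ (tauP p) := by
  rw [derivResolvent, natDegree_map, eval_finsetSum, aeval_tauP, Finset.mul_sum]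
  refine Finset.sum_congr rfl fun k _ => ?_
  rw [eval_mul, eval_C, ← coeff_zero_eq_eval_zero, coeff_iterate_derivative, zero_add,
    Nat.descFactorial_self, coeff_map, nsmul_eq_mul, Complex.coe_algebraMap, pow_succ']
  ring

theorem eq_zero_of_derivative_eq_C_mul {R : Type*} [CommRing R] [NoZeroDivisors R] {a : R}
    (ha : a ≠ 0) {p : R[X]} (h : derivative p = C a * p) : p = 0 := by
  have hlead : a * p.leadingCoeff = 0 := by
    rw [leadingCoeff, ← coeff_C_mul, ← h, coeff_derivative,
      coeff_eq_zero_of_natDegree_lt (lt_add_one _), zero_mul]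
  exact leadingCoeff_eq_zero.1 ((mul_eq_zero.1 hlead).resolve_left ha)

variable {s : ℕ} {c : Fin s → ℝ}

theorem piPoly_eq_nodal : piPoly s c = Lagrange.nodal Finset.univ c := rfl

theorem exists_eq_C_mul_piPoly_map (hc : Function.Injective c) {q : ℂ[X]}
    (hq : q.natDegree ≤ s) (hnodes : ∀ i, q.eval (c i : ℂ) = 0) :
    ∃ γ, q = C γ * (piPoly s c).map (algebraMap ℝ ℂ) := by
  have hπ : ((piPoly s c).map (algebraMap ℝ ℂ)).Monic ∧
      ((piPoly s c).map (algebraMap ℝ ℂ)).natDegree = s := by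
    rw [piPoly_eq_nodal]
    exact ⟨Lagrange.nodal_monic.map _, by rw [natDegree_map, Lagrange.natDegree_nodal,
      Finset.card_univ, Fintype.card_fin]⟩
  set π := (piPoly s c).map (algebraMap ℝ ℂ)
  refine ⟨q.coeff s, sub_eq_zero.1 <| eq_zero_of_degree_lt_of_eval_index_eq_zero
    Finset.univ (v := fun i => (c i : ℂ)) (Complex.ofReal_injective.comp hc).injOn ?_ ?_⟩
  · rw [Finset.card_univ, Fintype.card_fin, degree_lt_iff_coeff_zero]
    intro m hm
    rcases hm.eq_or_lt with rfl | hm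
    · rw [coeff_sub, coeff_C_mul, ← hπ.2, hπ.1.coeff_natDegree, hπ.2, mul_one, sub_self]
    · rw [coeff_sub, coeff_C_mul, coeff_eq_zero_of_natDegree_lt (hq.trans_lt hm),
        coeff_eq_zero_of_natDegree_lt (hπ.2.trans_lt hm), mul_zero, sub_zero]
  · intro i _
    rw [eval_sub, eval_mul, hnodes, eval_ofReal_map, piPoly_eq_nodal,
      Lagrange.eval_nodal_at_node (Finset.mem_univ i), Complex.ofReal_zero, mul_zero, sub_zero]

def IsCollocSol (c : Fin s → ℝ) (lam : ℂ) (u : ℂ[X]) : Prop :=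
  u.natDegree ≤ s ∧ ∀ i, (derivative u).eval (c i : ℂ) = lam * u.eval (c i : ℂ)

theorem IsCollocSol.eq_zero (hc : Function.Injective c) {lam : ℂ} (hlam : lam ≠ 0)
    (hτ : aeval lam⁻¹ (tauP (piPoly s c)) ≠ 0) {u : ℂ[X]} (hu : IsCollocSol c lam u)
    (h0 : u.eval 0 = 0) : u = 0 := by
  set π := (piPoly s c).map (algebraMap ℝ ℂ)
  obtain ⟨γ, hγ⟩ : ∃ γ, derivative u - C lam * u = C γ * π := by
    refine exists_eq_C_mul_piPoly_map hc ?_ fun i => ?_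
    · exact (natDegree_sub_le _ _).trans <| max_le
        ((natDegree_derivative_le u).trans (tsub_le_self.trans hu.1))
        ((natDegree_C_mul_le _ _).trans hu.1)
    · rw [eval_sub, eval_mul, eval_C, hu.2 i, sub_self]
  set F := derivResolvent lam⁻¹ π
  have hCC : C lam * C lam⁻¹ = 1 := by rw [← C_mul, mul_inv_cancel₀ hlam, C_1]
  have hF : derivative F = C lam * F - π := by
    linear_combination (-C lam) * derivResolvent_sub_C_mul_derivative lam⁻¹ π -
      (derivative F + π) * hCC
  have hw : u + C γ * F = 0 := by
    refine eq_zero_of_derivative_eq_C_mul hlam ?_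
    rw [derivative_add, derivative_C_mul, hF]
    linear_combination hγ
  have hγ0 : γ = 0 := by
    have := congrArg (eval 0) hw
    rw [eval_add, eval_mul, eval_C, h0, eval_zero_derivResolvent_map, eval_zero, zero_add] at this
    simpa [hlam, hτ] using this
  rw [hγ0, C_0, zero_mul] at hγ
  exact eq_zero_of_derivative_eq_C_mul hlam (by linear_combination hγ)

end Uniqueness

section Stability

variable {s : ℕ} {c : Fin s → ℝ} {lam : ℂ}

theorem IsCollocSol.sub_C_mul {u w : ℂ[X]} (hu : IsCollocSol c lam u)
    (hw : IsCollocSol c lam w) (a : ℂ) : IsCollocSol c lam (u - C a * w) := by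
  refine ⟨(natDegree_sub_le _ _).trans (max_le hu.1 ((natDegree_C_mul_le _ _).trans hw.1)),
    fun i => ?_⟩
  simp only [derivative_sub, derivative_C_mul, eval_sub, eval_mul, eval_C, hu.2, hw.2]
  ring

theorem IsCollocSol.comp_one_sub_X (hsym : ∀ i, c i + c i.rev = 1) {u : ℂ[X]}
    (hu : IsCollocSol c lam u) : IsCollocSol c (-lam) (u.comp (1 - X)) := by
  have hrev (i : Fin s) : (1 - X : ℂ[X]).eval (c i : ℂ) = c i.rev := by
    rw [eval_sub, eval_one, eval_X, eq_sub_of_add_eq' (hsym i)]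
    push_cast
    ring
  refine ⟨?_, fun i => ?_⟩
  · rw [natDegree_comp, show (1 - X : ℂ[X]) = -(X - C 1) by rw [C_1]; ring, natDegree_neg,
      natDegree_X_sub_C, mul_one]
    exact hu.1
  · rw [derivative_comp_one_sub_X, eval_neg, eval_comp, eval_comp, hrev, hu.2, neg_mul]

theorem eval_map_conj (p : ℂ[X]) (z : ℂ) :
    (p.map (starRingEnd ℂ)).eval z = starRingEnd ℂ (p.eval (starRingEnd ℂ z)) := by
  conv_lhs => rw [← Complex.conj_conj z]
  exact eval_map_apply _ _

theorem IsCollocSol.map_conj {u : ℂ[X]} (hu : IsCollocSol c lam u) :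
    IsCollocSol c (starRingEnd ℂ lam) (u.map (starRingEnd ℂ)) := by
  refine ⟨natDegree_map_le.trans hu.1, fun i => ?_⟩
  rw [derivative_map, eval_map_conj, eval_map_conj, Complex.conj_ofReal, hu.2, map_mul]

theorem isCollocSol_collocPoly (hc : Function.Injective c) {e : ℂ} {v : Fin s → ℂ}
    (hv : (1 - lam • collocAC s c) *ᵥ v = fun _ => e) :
    IsCollocSol c lam (collocPoly c lam e v) ∧
      ∀ i, (collocPoly c lam e v).eval (c i : ℂ) = v i := by
  have hnode (i : Fin s) : (collocPoly c lam e v).eval (c i : ℂ) = v i := by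
    have := congrFun hv i
    rw [sub_mulVec, one_mulVec, smul_mulVec, Pi.sub_apply, Pi.smul_apply, smul_eq_mul] at this
    rw [eval_collocPoly_node]
    linear_combination -this
  exact ⟨⟨natDegree_collocPoly_le lam e v hc, fun i => by
    rw [eval_derivative_collocPoly_node lam e v hc, hnode]⟩, hnode⟩

theorem isUnit_det_one_sub_smul_collocAC (hc : Function.Injective c)
    (hτ : lam ≠ 0 → aeval lam⁻¹ (tauP (piPoly s c)) ≠ 0) :
    IsUnit (1 - lam • collocAC s c).det := by
  rcases eq_or_ne lam 0 with rfl | hlam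
  · simp
  rw [isUnit_iff_ne_zero]
  intro hdet
  obtain ⟨v, hv0, hv⟩ := exists_mulVec_eq_zero_iff.2 hdet
  obtain ⟨hu, hnode⟩ := isCollocSol_collocPoly (e := 0) hc hv
  have hu0 := hu.eq_zero hc hlam (hτ hlam) (eval_zero_collocPoly lam 0 v)
  exact hv0 (funext fun i => by rw [← hnode i, hu0, eval_zero, Pi.zero_apply])

theorem norm_stabR_eq_one (hc : Function.Injective c) (hsym : ∀ i, c i + c i.rev = 1)
    (hre : lam.re = 0) (hlam : lam ≠ 0) (hτ : aeval (-lam)⁻¹ (tauP (piPoly s c)) ≠ 0)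
    (hunit : IsUnit (1 - lam • collocAC s c).det) : ‖stabR s c lam‖ = 1 := by
  set g := (1 - lam • collocAC s c)⁻¹ *ᵥ fun _ => (1 : ℂ)
  have hg : (1 - lam • collocAC s c) *ᵥ g = fun _ => 1 := by
    rw [mulVec_mulVec, mul_nonsing_inv _ hunit, one_mulVec]
  set u := collocPoly c lam 1 g
  have hu0 : u.eval 0 = 1 := eval_zero_collocPoly lam 1 g
  have hu1 : u.eval 1 = stabR s c lam := eval_one_collocPoly lam 1 g
  have hconj : starRingEnd ℂ lam = -lam := by
    rw [← Complex.re_add_im lam, hre]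
    simp
  have hu : IsCollocSol c lam u := (isCollocSol_collocPoly hc hg).1
  have hw := (hu.comp_one_sub_X hsym).sub_C_mul (hconj ▸ hu.map_conj) (stabR s c lam)
  have hw0 := hw.eq_zero hc (neg_ne_zero.2 hlam) hτ (by
    simp only [eval_sub, eval_comp, eval_mul, eval_C, eval_map_conj, eval_one, eval_X, sub_zero,
      map_zero, hu0, hu1, map_one, mul_one, sub_self])
  have h1 := congrArg (eval 1) hw0
  simp only [eval_sub, eval_comp, eval_mul, eval_C, eval_map_conj, eval_one, eval_X, sub_self,
    map_one, hu0, hu1, eval_zero] at h1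
  have hsq : ((‖stabR s c lam‖ ^ 2 : ℝ) : ℂ) = 1 := by
    push_cast
    rw [← Complex.mul_conj']
    linear_combination -h1
  exact (pow_eq_one_iff_of_nonneg (norm_nonneg _) two_ne_zero).1 (mod_cast hsq)

theorem det_collocAC_ne_zero (hc : Function.Injective c) (h0 : ∀ i, c i ≠ 0) :
    (collocAC s c).det ≠ 0 := by
  intro hdet
  obtain ⟨v, hv0, hv⟩ := exists_mulVec_eq_zero_iff.2 hdet
  set u := collocPoly c 1 0 v
  set nodes : Finset ℂ := insert 0 (Finset.univ.image fun i => (c i : ℂ))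
  have hcard : nodes.card = s + 1 := by
    rw [Finset.card_insert_of_notMem, Finset.card_image_of_injective (f := fun i => (c i : ℂ)) _
      (Complex.ofReal_injective.comp hc), Finset.card_univ, Fintype.card_fin]
    simpa [eq_comm] using h0
  have hu : u = 0 := by
    refine eq_zero_of_natDegree_lt_card_of_eval_eq_zero' u nodes ?_
      (hcard ▸ Nat.lt_succ_of_le (natDegree_collocPoly_le 1 0 v hc))
    simp only [nodes, Finset.mem_insert, Finset.mem_image, Finset.mem_univ, true_and]
    rintro x (rfl | ⟨i, rfl⟩)
    · exact eval_zero_collocPoly 1 0 v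
    · rw [eval_collocPoly_node, hv, Pi.zero_apply, mul_zero, add_zero]
  refine hv0 (funext fun i => ?_)
  simpa [u, hu] using (eval_derivative_collocPoly_node 1 0 v hc i).symm

theorem aeval_zero_tauP_piPoly_eq_zero {i : Fin s} (hi : c i = 0) :
    aeval (0 : ℂ) (tauP (piPoly s c)) = 0 := by
  rw [← coeff_zero_eq_aeval_zero', coeff_tauP, coeff_zero_eq_eval_zero, piPoly_eq_nodal,
    ← hi, Lagrange.eval_nodal_at_node (Finset.mem_univ i), mul_zero, map_zero]

end Stability

section Boundedness

theorem exists_norm_le_of_re_eq_zero {E : Type*} [NormedAddCommGroup E] {f : ℂ → E} {a : E}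
    (hf : ∀ z : ℂ, z.re = 0 → ContinuousAt f z) (hlim : Tendsto f (cobounded ℂ) (𝓝 a)) :
    ∃ M, ∀ z : ℂ, z.re = 0 → ‖f z‖ ≤ M := by
  have hI : Continuous fun y : ℝ => (y : ℂ) * Complex.I := by fun_prop
  have hg : Continuous fun y : ℝ => f (y * Complex.I) :=
    continuous_iff_continuousAt.2 fun y => (hf _ (by simp)).comp hI.continuousAt
  have hIlim : Tendsto (fun y : ℝ => (y : ℂ) * Complex.I) (cocompact ℝ) (cobounded ℂ) := by
    refine tendsto_norm_atTop_iff_cobounded.1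
      ((tendsto_norm_cocompact_atTop (E := ℝ)).congr fun y => ?_)
    simp
  obtain ⟨M, hM⟩ := isBounded_iff_forall_norm_le.1
    (hg.isBounded_range_iff_isBigO.2 ((hlim.comp hIlim).isBigO_one ℝ))
  refine ⟨M, fun z hz => hM _ ⟨z.im, congrArg f ?_⟩⟩
  apply Complex.ext <;> simp [hz]

variable {𝕜 : Type*} [NontriviallyNormedField 𝕜] {n : Type*} [Fintype n] [DecidableEq n]

theorem ContinuousAt.matrix_inv {X : Type*} [TopologicalSpace X] {f : X → Matrix n n 𝕜} {x : X}
    (hf : ContinuousAt f x) (hx : IsUnit (f x).det) : ContinuousAt (fun y => (f y)⁻¹) x := by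
  refine (continuousAt_matrix_inv _ ?_).comp hf
  rw [Ring.inverse_eq_inv']
  exact continuousAt_inv₀ hx.ne_zero

theorem continuousAt_inv_one_sub_smul (A : Matrix n n 𝕜) {z : 𝕜} (hz : IsUnit (1 - z • A).det) :
    ContinuousAt (fun w : 𝕜 => (1 - w • A)⁻¹) z :=
  ContinuousAt.matrix_inv (by fun_prop) hz

theorem tendsto_smul_inv_one_sub_smul_cobounded (A : Matrix n n 𝕜) (hA : A.det ≠ 0) :
    Tendsto (fun z : 𝕜 => z • (1 - z • A)⁻¹) (cobounded 𝕜) (𝓝 (-A)⁻¹) := by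
  have hcont : Continuous fun w : 𝕜 => w • (1 : Matrix n n 𝕜) - A := by fun_prop
  have hdet0 : ((0 : 𝕜) • (1 : Matrix n n 𝕜) - A).det ≠ 0 := by
    simpa [det_neg] using hA
  have hlim := ((hcont.continuousAt.matrix_inv (isUnit_iff_ne_zero.2 hdet0)).tendsto.comp
    tendsto_inv₀_cobounded)
  rw [zero_smul, zero_sub] at hlim
  have hunit : ∀ᶠ z in cobounded 𝕜, (z⁻¹ • (1 : Matrix n n 𝕜) - A).det ≠ 0 :=
    tendsto_inv₀_cobounded.eventually (hcont.matrix_det.continuousAt.eventually_ne hdet0)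
  refine hlim.congr' ?_
  filter_upwards [hunit, eventually_ne_cobounded 0] with z hz hz0
  have hsplit : 1 - z • A = z • (z⁻¹ • (1 : Matrix n n 𝕜) - A) := by
    rw [smul_sub, smul_smul, mul_inv_cancel₀ hz0, one_smul]
  have := invertibleOfNonzero hz0
  rw [Function.comp_apply, hsplit, inv_smul _ _ (isUnit_iff_ne_zero.2 hz), smul_smul,
    mul_invOf_self, one_smul]

theorem tendsto_inv_one_sub_smul_cobounded (A : Matrix n n 𝕜) (hA : A.det ≠ 0) :
    Tendsto (fun z : 𝕜 => (1 - z • A)⁻¹) (cobounded 𝕜) (𝓝 0) := by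
  have := tendsto_inv₀_cobounded.smul (tendsto_smul_inv_one_sub_smul_cobounded A hA)
  rw [zero_smul] at this
  refine this.congr' ((eventually_ne_cobounded 0).mono fun z hz => ?_)
  rw [smul_smul, inv_mul_cancel₀ hz, one_smul]

variable (A : Matrix n n ℂ)

theorem exists_norm_inv_one_sub_smul_le (hA : A.det ≠ 0)
    (hunit : ∀ z : ℂ, z.re = 0 → IsUnit (1 - z • A).det) :
    ∃ M, ∀ z : ℂ, z.re = 0 → ∀ i j, ‖(1 - z • A)⁻¹ i j‖ ≤ M := by
  obtain ⟨M, hM⟩ := exists_norm_le_of_re_eq_zero (E := n → n → ℂ)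
    (fun z hz => continuousAt_inv_one_sub_smul A (hunit z hz))
    (tendsto_inv_one_sub_smul_cobounded A hA)
  exact ⟨M, fun z hz i j => (norm_le_pi_norm _ j).trans ((norm_le_pi_norm _ i).trans (hM z hz))⟩

theorem exists_norm_mul_vecMul_inv_one_sub_smul_le (hA : A.det ≠ 0)
    (hunit : ∀ z : ℂ, z.re = 0 → IsUnit (1 - z • A).det) (b : n → ℂ) :
    ∃ M, ∀ z : ℂ, z.re = 0 → ∀ j, ‖z * (b ᵥ* (1 - z • A)⁻¹) j‖ ≤ M := by
  have hvecMul : Continuous fun N : Matrix n n ℂ => b ᵥ* N :=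
    continuous_const.matrix_vecMul continuous_id
  obtain ⟨M, hM⟩ := exists_norm_le_of_re_eq_zero (f := fun z : ℂ => b ᵥ* (z • (1 - z • A)⁻¹))
    (fun z hz => hvecMul.continuousAt.comp
      (continuousAt_id.smul (continuousAt_inv_one_sub_smul A (hunit z hz))))
    ((hvecMul.tendsto _).comp (tendsto_smul_inv_one_sub_smul_cobounded A hA))
  refine ⟨M, fun z hz j => ?_⟩
  simpa only [vecMul_smul, Pi.smul_apply, smul_eq_mul] using
    (norm_le_pi_norm _ j).trans (hM z hz)

end Boundedness

end

theorem symmetric_hatI_stable_general (s : ℕ) (c : Fin s → ℝ) (hc : StrictMono c)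
    (hsym : ∀ i : Fin s, c i + c i.rev = 1)
    (hroot : ∀ z : ℂ, z.re = 0 → Polynomial.aeval z (tauP (piPoly s c)) ≠ 0) :
    IStable s c ∧ ISStable s c ∧ ISIStable s c := by
  have hτ {z : ℂ} (hz : z.re = 0) : aeval z⁻¹ (tauP (piPoly s c)) ≠ 0 :=
    hroot _ (by simp [Complex.inv_re, hz])
  have hunit (z : ℂ) (hz : z.re = 0) : IsUnit (1 - z • collocAC s c).det :=
    isUnit_det_one_sub_smul_collocAC hc.injective fun _ => hτ hz
  have hdet : (collocAC s c).det ≠ 0 :=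
    det_collocAC_ne_zero hc.injective fun i hi =>
      hroot 0 Complex.zero_re (aeval_zero_tauP_piPoly_eq_zero hi)
  refine ⟨fun z hz _ => ?_, ⟨hunit, exists_norm_mul_vecMul_inv_one_sub_smul_le _ hdet hunit _⟩,
    hunit, exists_norm_inv_one_sub_smul_le _ hdet hunit⟩
  rcases eq_or_ne z 0 with rfl | hz0
  · simp [stabR]
  · exact (norm_stabR_eq_one hc.injective hsym hz hz0 (hτ (by simp [hz]))
      (hunit z hz)).le

/-- a collocation method with points symmetric with respect to `1/2` such that
`τ(π)` has no root on `iℝ` is `Î`-stable. -/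
theorem symmetric_hatI_stable (s : ℕ) (hs : 1 ≤ s) (c : Fin s → ℝ) (hc : StrictMono c)
    (hsym : ∀ i : Fin s, c i + c i.rev = 1)
    (hroot : ∀ z : ℂ, z.re = 0 → Polynomial.aeval z (tauP (piPoly s c)) ≠ 0) :
    IStable s c ∧ ISStable s c ∧ ISIStable s c :=
  symmetric_hatI_stable_general s c hc hsym hroot
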